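/- For any integer t ≥ 2, every partition λ is equivalent under ∼_j to a unique generalized (j,t)-core, where λ ∼_j μ means β_k(t;λ) = β_k(t;μ) for all 0 ≤ k ≤ j. -/

import Mathlib

open PowerSeries

/-- The type of all integer partitions (of any size). -/
abbrev Ptn : Type := Σ n : ℕ, Nat.Partition n

/-- Build a partition from an arbitrary multiset of naturals by discarding the zeros. -/
def ptnOfMultiset (m : Multiset ℕ) : Ptn :=
  ⟨(m.filter (fun x => 0 < x)).sum,
   ⟨m.filter (fun x => 0 < x), fun hi => (Multiset.mem_filter.mp hi).2, rfl⟩⟩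

/-- The `i`-th largest part of a partition (0-indexed), or `0` if there is none. -/
def partAt (p : Ptn) (i : ℕ) : ℕ := ((p.2.parts.sort (· ≤ ·)).reverse).getD i 0

/-- The beta-set (set of first-column hook lengths) of `p`, computed with `K` beads:
`{λ_i + (K - 1 - i) : 0 ≤ i < K}`. -/
def betaSet (p : Ptn) (K : ℕ) : Finset ℕ :=
  (Finset.range K).image (fun i => partAt p i + (K - 1 - i))

/-- The partition whose beta-set (for `S.card` beads) is the finite set `S`. -/
def ptnOfBetaSet (S : Finset ℕ) : Ptn :=
  ptnOfMultiset (((S.sort (· ≤ ·)).mapIdx (fun i b => b - i) : List ℕ) : Multiset ℕ)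

/-- A normalized number of beads for the `t`-abacus of `p`: divisible by `t` and
at least the number of parts, which makes the `t`-quotient labelling canonical. -/
def beads (t : ℕ) (p : Ptn) : ℕ := t * p.2.parts.card

/-- The `t`-core of a partition, via the abacus: push all beads down their runners. -/
def core (t : ℕ) (p : Ptn) : Ptn :=
  ptnOfBetaSet ((Finset.range t).biUnion (fun r =>
    (Finset.range (((betaSet p (beads t p)).filter (fun b => b % t = r)).card)).image
      (fun j => r + t * j)))

/-- The `t`-quotient of a partition, via the abacus: the `r`-th component is read off
from the beads on runner `r`. -/
def quotient (t : ℕ) (p : Ptn) : List Ptn :=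
  (List.range t).map (fun r =>
    ptnOfBetaSet (((betaSet p (beads t p)).filter (fun b => b % t = r)).image (fun b => b / t)))

/-- Row `j` of the `t`-core pre-tower of `p`: `α_0 = [p]`, and `α_{j+1}` is obtained by
concatenating the `t`-quotients of the partitions in `α_j`. -/
def preTower (t : ℕ) (p : Ptn) : ℕ → List Ptn
  | 0 => [p]
  | j + 1 => (preTower t p j).flatMap (quotient t)

/-- Row `j` of the `t`-core tower of `p`: the `t`-cores of the partitions in `α_j`. -/
def towerRow (t : ℕ) (p : Ptn) (j : ℕ) : List Ptn := (preTower t p j).map (core t)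

/-- The total size of a row: the sum of the sizes of its partitions. -/
def rowSize (l : List Ptn) : ℕ := (l.map (fun q => q.1)).sum

/-- The formal power series `(q^m; q^m)_∞ ^ s`, defined coefficientwise (the `n`-th
coefficient of the infinite product agrees with that of the finite product
`∏_{k=1}^n (1 - q^{mk})^s`). -/
noncomputable def eulerProd (m s : ℕ) : PowerSeries ℚ :=
  PowerSeries.mk fun n =>
    PowerSeries.coeff (R := ℚ) n (∏ k ∈ Finset.Icc 1 n, (1 - PowerSeries.X ^ (m * k)) ^ s)

/-- The series `G(q^m) = ∑_{k ≥ 1} σ_1(k) q^{mk}`. -/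
noncomputable def Gm (m : ℕ) : PowerSeries ℚ :=
  PowerSeries.mk fun n => if m ∣ n ∧ n ≠ 0 then (∑ d ∈ (n / m).divisors, (d : ℚ)) else 0
/-- The number of cells in column `j` (0-indexed) of the Young diagram of `p`. -/
def colLen (p : Ptn) (j : ℕ) : ℕ := Multiset.countP (fun a => j < a) p.2.parts

/-- The hook length of the cell in row `i`, column `j` (0-indexed) of `p`:
arm length + leg length + 1. -/
def hookLength (p : Ptn) (i j : ℕ) : ℕ := (partAt p i - j) + (colLen p j - (i + 1))

/-- A partition is a `t`-core if no hook length of a cell of its Young diagram is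
divisible by `t`. -/
def IsTCore (t : ℕ) (p : Ptn) : Prop :=
  ∀ i j : ℕ, j < partAt p i → ¬ t ∣ hookLength p i j

/-- A partition is a generalized `(j,t)`-core if every partition in row `j+1` of its
`t`-core pre-tower is empty. -/
def IsGenCore (t j : ℕ) (p : Ptn) : Prop :=
  ∀ q ∈ preTower t p (j + 1), q.1 = 0

/-- `T_{j,t}(q) = ∑_{λ ∈ P} |β_j(t;λ)| q^{|λ|}`. -/
noncomputable def Tgen (t j : ℕ) : PowerSeries ℚ :=
  PowerSeries.mk fun n => ∑ p : Nat.Partition n, (rowSize (towerRow t ⟨n, p⟩ j) : ℚ)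

/-- The number of partitions of `n`. -/
noncomputable def pfun (n : ℕ) : ℕ := Nat.card (Nat.Partition n)

/-- `a_t(n)`: the sum of the sizes of the `t`-cores of all partitions of `n`. -/
noncomputable def acore (t n : ℕ) : ℕ := ∑ p : Nat.Partition n, (core t ⟨n, p⟩).1

/-- The number of `t`-regular partitions of `n` (no part divisible by `t`). -/
noncomputable def preg (t n : ℕ) : ℕ :=
  Nat.card {p : Nat.Partition n // ∀ x ∈ p.parts, ¬ t ∣ x}

/-! A partition with at most `K` parts is the same thing as a `K`-element beta-set; on the
`t`-abacus such a set splits into `t` runners, the core keeps only the number of beads on each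
runner and the quotient keeps the runners themselves, so a partition is determined by its core
and its quotient, and every `t`-core together with any `t` partitions arises this way. Since
row `k + 1` of the tower of `λ` is the concatenation of row `k` of the towers of the
quotient parts of `λ`, induction on `j` gives both existence (rebuild a generalized core from
the core of `λ` and generalized cores of its quotient parts) and uniqueness. -/

open Finset

theorem Ptn.ext_parts {p q : Ptn} (h : p.2.parts = q.2.parts) : p = q := by
  obtain ⟨n, P⟩ := p
  obtain ⟨m, Q⟩ := q
  obtain rfl : n = m := by rw [← P.parts_sum, ← Q.parts_sum, h]
  obtain rfl : P = Q := Nat.Partition.ext h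
  rfl

theorem Ptn.eq_of_size_eq_zero {p q : Ptn} (hp : p.1 = 0) (hq : q.1 = 0) : p = q := by
  obtain ⟨n, P⟩ := p
  obtain ⟨m, Q⟩ := q
  dsimp only at hp hq
  subst hp hq
  rw [Subsingleton.elim P Q]

theorem List.ext_getD_of_forall_pos {l l' : List ℕ} (hl : ∀ x ∈ l, 0 < x)
    (hl' : ∀ x ∈ l', 0 < x) (h : ∀ i, l.getD i 0 = l'.getD i 0) : l = l' := by
  induction l generalizing l' with
  | nil =>
    cases l' with
    | nil => rfl
    | cons b l' => exact absurd (h 0) (hl' b (by simp)).ne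
  | cons a l ih =>
    cases l' with
    | nil => exact absurd (h 0) (hl a (by simp)).ne'
    | cons b l' =>
      obtain rfl : a = b := h 0
      rw [ih (fun x hx => hl x (.tail _ hx)) (fun x hx => hl' x (.tail _ hx))
        fun i => h (i + 1)]

theorem Ptn.ext_partAt {p q : Ptn} (h : ∀ i, partAt p i = partAt q i) : p = q := by
  have hpos (r : Ptn) : ∀ x ∈ (r.2.parts.sort (· ≤ ·)).reverse, 0 < x := fun x hx =>
    r.2.parts_pos (by simpa using hx)
  have hsorted := List.ext_getD_of_forall_pos (hpos p) (hpos q) h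
  apply Ptn.ext_parts
  rw [← Multiset.sort_eq p.2.parts (· ≤ ·), ← Multiset.sort_eq q.2.parts (· ≤ ·),
    ← List.reverse_inj.mp hsorted]

theorem partAt_antitone (p : Ptn) {i j : ℕ} (h : i ≤ j) : partAt p j ≤ partAt p i := by
  unfold partAt
  set l := (p.2.parts.sort (· ≤ ·)).reverse
  have hl : l.Pairwise (· ≥ ·) :=
    List.pairwise_reverse.mpr ((p.2.parts.pairwise_sort (· ≤ ·)).imp id)
  by_cases hj : j < l.length
  · rw [List.getD_eq_getElem _ _ hj, List.getD_eq_getElem _ _ (h.trans_lt hj)]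
    rcases h.lt_or_eq with hij | rfl
    · exact List.pairwise_iff_getElem.mp hl i j _ hj hij
    · rfl
  · rw [List.getD_eq_default _ _ (not_lt.mp hj)]
    exact Nat.zero_le _

theorem partAt_eq_zero (p : Ptn) {i : ℕ} (h : p.2.parts.card ≤ i) : partAt p i = 0 :=
  List.getD_eq_default _ _ (by simpa using h)

theorem List.getD_filter_pos_of_antitone {l : List ℕ} (hl : l.Pairwise (· ≥ ·)) (i : ℕ) :
    (l.filter (0 < ·)).getD i 0 = l.getD i 0 := by
  induction l generalizing i with
  | nil => rfl
  | cons a l ih =>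
    obtain ⟨ha, hl⟩ := List.pairwise_cons.mp hl
    rcases Nat.eq_zero_or_pos a with rfl | ha0
    · have hzero : ∀ x ∈ (0 :: l), x = 0 := by simpa using ha
      rw [List.eq_replicate_iff.mpr ⟨rfl, hzero⟩]
      simp [List.getD_eq_getElem?_getD]
    · cases i with
      | zero => simp [ha0]
      | succ i =>
        simp only [List.filter_cons, ha0, decide_true, if_true, List.getD_cons_succ, ih hl]

theorem partAt_ptnOfMultiset {l : List ℕ} (hl : l.Pairwise (· ≤ ·)) (i : ℕ) :
    partAt (ptnOfMultiset l) i = l.reverse.getD i 0 := by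
  have hsort : Multiset.sort (↑(l.filter (0 < ·)) : Multiset ℕ) (· ≤ ·) = l.filter (0 < ·) :=
    List.mergeSort_eq_self _ (by simpa using hl.filter _)
  have hparts : (ptnOfMultiset l).2.parts = ↑(l.filter (0 < ·)) := Multiset.filter_coe _ _
  rw [partAt, hparts, hsort, ← List.filter_reverse, List.getD_filter_pos_of_antitone]
  exact List.pairwise_reverse.mpr hl

theorem card_parts_ptnOfBetaSet_le (S : Finset ℕ) :
    (ptnOfBetaSet S).2.parts.card ≤ S.card := by
  dsimp only [ptnOfBetaSet, ptnOfMultiset]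
  refine le_trans (Multiset.card_le_card (Multiset.filter_le _ _)) ?_
  rw [Multiset.coe_card, List.length_mapIdx, Finset.length_sort]

theorem List.getElem_add_sub_le_of_pairwise_lt {l : List ℕ} (hl : l.Pairwise (· < ·))
    {i j : ℕ} (hij : i ≤ j) (hj : j < l.length) : l[i] + (j - i) ≤ l[j] := by
  induction j, hij using Nat.le_induction with
  | base => simp
  | succ j hij ih =>
    have := List.pairwise_iff_getElem.mp hl j (j + 1) (by omega) hj (by omega)
    have := ih (by omega)
    omega

theorem betaSet_ptnOfBetaSet (S : Finset ℕ) : betaSet (ptnOfBetaSet S) S.card = S := by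
  set K := S.card
  set s := S.sort (· ≤ ·)
  have hlen : s.length = K := Finset.length_sort _
  have hs : s.Pairwise (· < ·) := (Finset.sortedLT_sort S).pairwise
  have hge (i : ℕ) (hi : i < s.length) : i ≤ s[i] := by
    have := List.getElem_add_sub_le_of_pairwise_lt hs (Nat.zero_le i) hi
    omega
  have hmono : (s.mapIdx fun i b => b - i).Pairwise (· ≤ ·) := by
    refine List.pairwise_iff_getElem.mpr fun i j hi hj hij => ?_
    simp only [List.getElem_mapIdx]
    have := List.getElem_add_sub_le_of_pairwise_lt hs hij.le (by simpa using hj)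
    omega
  have hpart (i : ℕ) (hi : i < K) :
      partAt (ptnOfBetaSet S) i + (K - 1 - i) = s[K - 1 - i] := by
    rw [ptnOfBetaSet, partAt_ptnOfMultiset hmono, List.getD_eq_getElem _ _ (by simp; omega)]
    simp only [List.getElem_reverse, List.getElem_mapIdx, List.length_mapIdx, hlen]
    have := hge (K - 1 - i) (by omega)
    omega
  ext x
  simp only [betaSet, Finset.mem_image, Finset.mem_range]
  constructor
  · rintro ⟨i, hi, rfl⟩
    rw [hpart i hi]
    exact (Finset.mem_sort _).mp (List.getElem_mem _)
  · intro hx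
    obtain ⟨k, hk, rfl⟩ := List.getElem_of_mem ((Finset.mem_sort (· ≤ ·)).mpr hx)
    rw [Finset.length_sort] at hk
    refine ⟨K - 1 - k, by omega, ?_⟩
    rw [hpart _ (by omega)]
    simp only [show K - 1 - (K - 1 - k) = k by omega]
    rfl

theorem sort_betaSet (p : Ptn) (K : ℕ) :
    (betaSet p K).sort (· ≤ ·) = (List.range K).map fun i => partAt p (K - 1 - i) + i := by
  have hlt : ((List.range K).map fun i => partAt p (K - 1 - i) + i).Pairwise (· < ·) :=
    List.pairwise_map.mpr <| List.pairwise_lt_range.imp fun {i j} hij => by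
      have := partAt_antitone p (show K - 1 - j ≤ K - 1 - i by omega)
      omega
  have hset : betaSet p K = ((List.range K).map fun i => partAt p (K - 1 - i) + i).toFinset := by
    ext x
    simp only [betaSet, Finset.mem_image, Finset.mem_range, List.mem_toFinset, List.mem_map,
      List.mem_range]
    constructor <;>
    · rintro ⟨i, hi, rfl⟩
      exact ⟨K - 1 - i, by omega, by rw [show K - 1 - (K - 1 - i) = i by omega]⟩
  rw [hset, List.toFinset_sort _ hlt.nodup]
  exact hlt.imp le_of_lt

theorem card_betaSet (p : Ptn) (K : ℕ) : (betaSet p K).card = K := by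
  rw [← Finset.length_sort (· ≤ ·), sort_betaSet, List.length_map, List.length_range]

theorem eq_of_betaSet_eq {p q : Ptn} {K : ℕ} (hp : p.2.parts.card ≤ K)
    (hq : q.2.parts.card ≤ K) (h : betaSet p K = betaSet q K) : p = q := by
  have hsort := congrArg (·.sort (· ≤ ·)) h
  simp only [sort_betaSet, List.map_inj_left, List.mem_range] at hsort
  refine Ptn.ext_partAt fun i => ?_
  by_cases hi : i < K
  · simpa [show K - 1 - (K - 1 - i) = i by omega] using hsort (K - 1 - i) (by omega)
  · rw [partAt_eq_zero p (by omega), partAt_eq_zero q (by omega)]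

theorem ptnOfBetaSet_betaSet {p : Ptn} {K : ℕ} (hK : p.2.parts.card ≤ K) :
    ptnOfBetaSet (betaSet p K) = p := by
  have h := betaSet_ptnOfBetaSet (betaSet p K)
  rw [card_betaSet] at h
  exact eq_of_betaSet_eq ((card_parts_ptnOfBetaSet_le _).trans (card_betaSet p K).le) hK h

theorem eq_of_ptnOfBetaSet_eq {S T : Finset ℕ} (hcard : S.card = T.card)
    (h : ptnOfBetaSet S = ptnOfBetaSet T) : S = T := by
  rw [← betaSet_ptnOfBetaSet S, ← betaSet_ptnOfBetaSet T, h, hcard]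

def shiftBeads (S : Finset ℕ) : Finset ℕ := insert 0 (S.image (· + 1))

theorem card_shiftBeads (S : Finset ℕ) : (shiftBeads S).card = S.card + 1 := by
  rw [shiftBeads, Finset.card_insert_of_notMem (by simp),
    Finset.card_image_of_injective _ (add_left_injective 1)]

theorem iterate_shiftBeads (n : ℕ) (S : Finset ℕ) :
    shiftBeads^[n] S = range n ∪ S.image (· + n) := by
  induction n with
  | zero => simp
  | succ n ih =>
    rw [Function.iterate_succ_apply', ih]
    ext x
    simp only [shiftBeads, mem_insert, mem_image, mem_union, mem_range]
    constructor
    · rintro (rfl | ⟨y, hy | ⟨b, hb, rfl⟩, rfl⟩)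
      · omega
      · omega
      · exact Or.inr ⟨b, hb, by omega⟩
    · rintro (hx | ⟨b, hb, rfl⟩)
      · rcases x with _ | x
        · exact Or.inl rfl
        · exact Or.inr ⟨x, Or.inl (by omega), rfl⟩
      · exact Or.inr ⟨b + n, Or.inr ⟨b, hb, rfl⟩, by omega⟩

theorem range_succ_eq_shiftBeads (n : ℕ) : range (n + 1) = shiftBeads (range n) := by
  simpa [iterate_shiftBeads] using Function.iterate_succ_apply' shiftBeads n ∅

theorem betaSet_succ {p : Ptn} {K : ℕ} (hK : p.2.parts.card ≤ K) :
    betaSet p (K + 1) = shiftBeads (betaSet p K) := by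
  ext x
  simp only [betaSet, shiftBeads, mem_insert, mem_image, mem_range]
  constructor
  · rintro ⟨i, hi, rfl⟩
    rcases (Nat.lt_succ_iff.mp hi).lt_or_eq with hi | rfl
    · exact Or.inr ⟨_, ⟨i, hi, rfl⟩, by omega⟩
    · simp [partAt_eq_zero p hK]
  · rintro (rfl | ⟨_, ⟨i, hi, rfl⟩, rfl⟩)
    · exact ⟨K, K.lt_succ_self, by simp [partAt_eq_zero p hK]⟩
    · exact ⟨i, by omega, by omega⟩

theorem betaSet_add {p : Ptn} {K : ℕ} (hK : p.2.parts.card ≤ K) (n : ℕ) :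
    betaSet p (K + n) = shiftBeads^[n] (betaSet p K) := by
  induction n with
  | zero => rfl
  | succ n ih => rw [← add_assoc, betaSet_succ (by omega), ih, Function.iterate_succ_apply']

theorem ptnOfBetaSet_shiftBeads (S : Finset ℕ) :
    ptnOfBetaSet (shiftBeads S) = ptnOfBetaSet S := by
  have hK := card_parts_ptnOfBetaSet_le S
  conv_lhs => rw [← betaSet_ptnOfBetaSet S, ← betaSet_succ hK]
  exact ptnOfBetaSet_betaSet (by omega)

theorem ptnOfBetaSet_iterate_shiftBeads (n : ℕ) (S : Finset ℕ) :
    ptnOfBetaSet (shiftBeads^[n] S) = ptnOfBetaSet S := by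
  induction n with
  | zero => rfl
  | succ n ih => rw [Function.iterate_succ_apply', ptnOfBetaSet_shiftBeads, ih]

theorem size_ptnOfBetaSet_range (n : ℕ) : (ptnOfBetaSet (range n)).1 = 0 := by
  have h := ptnOfBetaSet_iterate_shiftBeads n ∅
  rw [iterate_shiftBeads, image_empty, union_empty] at h
  rw [h]
  simp [ptnOfBetaSet, ptnOfMultiset]

/-- Runner `r` of the `t`-abacus of the bead set `S`: bead `b` sits on runner `b % t` at
level `b / t`. -/
def runner (t r : ℕ) (S : Finset ℕ) : Finset ℕ :=
  (S.filter fun b => b % t = r).image fun b => b / t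

def abacusOf (t : ℕ) (Q : ℕ → Finset ℕ) : Finset ℕ :=
  (range t).biUnion fun r => (Q r).image fun j => r + t * j

def abacusCore (t : ℕ) (S : Finset ℕ) : Finset ℕ :=
  abacusOf t fun r => range (runner t r S).card

def quotientPart (t : ℕ) (p : Ptn) (r : ℕ) : Ptn :=
  ptnOfBetaSet (runner t r (betaSet p (beads t p)))

theorem quotient_eq_map (t : ℕ) (p : Ptn) :
    quotient t p = (List.range t).map (quotientPart t p) := rfl

theorem mem_runner {t r b : ℕ} {S : Finset ℕ} :
    b ∈ runner t r S ↔ ∃ c ∈ S, c % t = r ∧ c / t = b := by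
  simp [runner, and_assoc]

theorem card_runner (t r : ℕ) (S : Finset ℕ) :
    (runner t r S).card = (S.filter fun b => b % t = r).card :=
  card_image_of_injOn fun b hb b' hb' h => by
    simp only [coe_filter, Set.mem_ofPred_eq] at hb hb'
    rw [← Nat.div_add_mod b t, ← Nat.div_add_mod b' t, h, hb.2, hb'.2]

theorem core_eq (t : ℕ) (p : Ptn) :
    core t p = ptnOfBetaSet (abacusCore t (betaSet p (beads t p))) := by
  simp only [abacusCore, abacusOf, card_runner]
  rfl

theorem mem_iff_div_mem_runner {t b : ℕ} {S : Finset ℕ} :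
    b ∈ S ↔ b / t ∈ runner t (b % t) S := by
  rw [mem_runner]
  refine ⟨fun hb => ⟨b, hb, rfl, rfl⟩, ?_⟩
  rintro ⟨c, hc, hmod, hdiv⟩
  rwa [← Nat.div_add_mod b t, ← hmod, ← hdiv, Nat.div_add_mod]

theorem eq_of_runner_eq {t : ℕ} (ht : 0 < t) {S T : Finset ℕ}
    (h : ∀ r < t, runner t r S = runner t r T) : S = T := by
  ext b
  rw [mem_iff_div_mem_runner, mem_iff_div_mem_runner (S := T), h _ (Nat.mod_lt b ht)]

theorem runner_abacusOf {t r : ℕ} (hr : r < t) (Q : ℕ → Finset ℕ) :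
    runner t r (abacusOf t Q) = Q r := by
  have hmod {r' j : ℕ} (hr' : r' < t) : (r' + t * j) % t = r' := by
    rw [Nat.add_mul_mod_self_left, Nat.mod_eq_of_lt hr']
  have hdiv {r' j : ℕ} (hr' : r' < t) : (r' + t * j) / t = j := by
    rw [Nat.add_mul_div_left _ _ (by omega), Nat.div_eq_of_lt hr', zero_add]
  ext x
  simp only [mem_runner, abacusOf, mem_biUnion, mem_range, mem_image]
  constructor
  · rintro ⟨_, ⟨r', hr', j, hj, rfl⟩, hmodr, rfl⟩
    rw [hmod hr'] at hmodr
    subst hmodr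
    rwa [hdiv hr']
  · exact fun hx => ⟨r + t * x, ⟨r, hr, x, hx, rfl⟩, hmod hr, hdiv hr⟩

theorem card_eq_sum_card_runner {t : ℕ} (ht : 0 < t) (S : Finset ℕ) :
    S.card = ∑ r ∈ range t, (runner t r S).card := by
  simp only [card_runner]
  exact card_eq_sum_card_fiberwise fun b _ => mem_range.mpr (Nat.mod_lt b ht)

theorem runner_iterate_shiftBeads {t r : ℕ} (hr : r < t) (S : Finset ℕ) :
    runner t r (shiftBeads^[t] S) = shiftBeads (runner t r S) := by
  ext x
  simp only [iterate_shiftBeads, shiftBeads, mem_runner, mem_union, mem_range, mem_image,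
    mem_insert]
  constructor
  · rintro ⟨c, hc | ⟨b, hb, rfl⟩, hmod, rfl⟩
    · exact Or.inl (Nat.div_eq_of_lt hc)
    · refine Or.inr ⟨b / t, ⟨b, hb, by rwa [Nat.add_mod_right] at hmod, rfl⟩, ?_⟩
      rw [Nat.add_div_right _ (by omega)]
  · rintro (rfl | ⟨_, ⟨b, hb, hmod, rfl⟩, rfl⟩)
    · exact ⟨r, Or.inl hr, Nat.mod_eq_of_lt hr, Nat.div_eq_of_lt hr⟩
    · exact ⟨b + t, Or.inr ⟨b, hb, rfl⟩, by rwa [Nat.add_mod_right],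
        Nat.add_div_right _ (by omega)⟩

theorem runner_abacusCore {t r : ℕ} (hr : r < t) (S : Finset ℕ) :
    runner t r (abacusCore t S) = range (runner t r S).card :=
  runner_abacusOf hr _

theorem card_abacusCore {t : ℕ} (ht : 0 < t) (S : Finset ℕ) :
    (abacusCore t S).card = S.card := by
  rw [card_eq_sum_card_runner ht, card_eq_sum_card_runner ht S]
  exact sum_congr rfl fun r hr => by rw [runner_abacusCore (mem_range.mp hr), card_range]

theorem abacusCore_abacusCore {t : ℕ} (ht : 0 < t) (S : Finset ℕ) :
    abacusCore t (abacusCore t S) = abacusCore t S :=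
  eq_of_runner_eq ht fun r hr => by
    rw [runner_abacusCore hr, runner_abacusCore hr, card_range]

theorem abacusCore_iterate_shiftBeads {t : ℕ} (ht : 0 < t) (S : Finset ℕ) :
    abacusCore t (shiftBeads^[t] S) = shiftBeads^[t] (abacusCore t S) :=
  eq_of_runner_eq ht fun r hr => by
    rw [runner_abacusCore hr, runner_iterate_shiftBeads hr, runner_iterate_shiftBeads hr,
      runner_abacusCore hr, card_shiftBeads, range_succ_eq_shiftBeads]

theorem apply_eq_apply_of_periodic_from {α : Type*} {f : ℕ → α} {t n K₁ K₂ : ℕ}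
    (hf : ∀ K, n ≤ K → f (K + t) = f K) (h₁ : n ≤ K₁) (h₂ : n ≤ K₂) (hd₁ : t ∣ K₁)
    (hd₂ : t ∣ K₂) : f K₁ = f K₂ := by
  have hstep (K : ℕ) (hK : n ≤ K) (m : ℕ) : f (K + t * m) = f K := by
    induction m with
    | zero => simp
    | succ m ih => rw [Nat.mul_succ, ← add_assoc, hf _ (by omega), ih]
  wlog h : K₁ ≤ K₂ generalizing K₁ K₂
  · exact (this h₂ h₁ hd₂ hd₁ (by omega)).symm
  obtain ⟨m, hm⟩ := Nat.dvd_sub hd₂ hd₁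
  rw [show K₂ = K₁ + t * m by omega, hstep K₁ h₁]

theorem card_parts_le_beads {t : ℕ} (ht : 0 < t) (p : Ptn) :
    p.2.parts.card ≤ beads t p :=
  Nat.le_mul_of_pos_left _ ht

section BeadCount

variable {t K : ℕ} {p : Ptn}

theorem core_eq_of_le (ht : 0 < t) (hK : p.2.parts.card ≤ K) (hd : t ∣ K) :
    core t p = ptnOfBetaSet (abacusCore t (betaSet p K)) := by
  rw [core_eq]
  refine apply_eq_apply_of_periodic_from (f := fun K => ptnOfBetaSet (abacusCore t (betaSet p K)))
    (fun K hK => ?_) (card_parts_le_beads ht p) hK (dvd_mul_right t _) hd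
  rw [betaSet_add hK, abacusCore_iterate_shiftBeads ht, ptnOfBetaSet_iterate_shiftBeads]

theorem quotientPart_eq_of_le {r : ℕ} (hr : r < t) (hK : p.2.parts.card ≤ K) (hd : t ∣ K) :
    quotientPart t p r = ptnOfBetaSet (runner t r (betaSet p K)) :=
  apply_eq_apply_of_periodic_from (f := fun K => ptnOfBetaSet (runner t r (betaSet p K)))
    (fun K hK => by
      rw [betaSet_add hK, runner_iterate_shiftBeads hr, ptnOfBetaSet_shiftBeads])
    (card_parts_le_beads (by omega) p) hK (dvd_mul_right t _) hd

theorem betaSet_core (ht : 0 < t) (hK : p.2.parts.card ≤ K) (hd : t ∣ K) :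
    betaSet (core t p) K = abacusCore t (betaSet p K) := by
  have h := betaSet_ptnOfBetaSet (abacusCore t (betaSet p K))
  rwa [card_abacusCore ht, card_betaSet, ← core_eq_of_le ht hK hd] at h

theorem card_parts_core_le (ht : 0 < t) (hK : p.2.parts.card ≤ K) (hd : t ∣ K) :
    (core t p).2.parts.card ≤ K := by
  rw [core_eq_of_le ht hK hd]
  exact (card_parts_ptnOfBetaSet_le _).trans (by rw [card_abacusCore ht, card_betaSet])

end BeadCount

theorem core_core {t : ℕ} (ht : 0 < t) (p : Ptn) : core t (core t p) = core t p := by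
  have hK := card_parts_le_beads ht p
  have hd : t ∣ beads t p := dvd_mul_right t _
  rw [core_eq_of_le ht (card_parts_core_le ht hK hd) hd, betaSet_core ht hK hd,
    abacusCore_abacusCore ht, ← core_eq_of_le ht hK hd]

theorem size_quotientPart_core {t r : ℕ} (hr : r < t) (p : Ptn) :
    (quotientPart t (core t p) r).1 = 0 := by
  have ht : 0 < t := by omega
  have hK := card_parts_le_beads ht p
  have hd : t ∣ beads t p := dvd_mul_right t _
  rw [quotientPart_eq_of_le hr (card_parts_core_le ht hK hd) hd, betaSet_core ht hK hd,
    runner_abacusCore hr, size_ptnOfBetaSet_range]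

theorem eq_of_core_eq_of_quotientPart_eq {t : ℕ} (ht : 0 < t) {p p' : Ptn}
    (hcore : core t p = core t p') (hquot : ∀ r < t, quotientPart t p r = quotientPart t p' r) :
    p = p' := by
  set K := beads t p + beads t p'
  have hK : p.2.parts.card ≤ K := (card_parts_le_beads ht p).trans (Nat.le_add_right _ _)
  have hK' : p'.2.parts.card ≤ K := (card_parts_le_beads ht p').trans (Nat.le_add_left _ _)
  have hd : t ∣ K := dvd_add (dvd_mul_right _ _) (dvd_mul_right _ _)
  have habacus : abacusCore t (betaSet p K) = abacusCore t (betaSet p' K) := by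
    rw [← betaSet_core ht hK hd, ← betaSet_core ht hK' hd, hcore]
  have hbeta : betaSet p K = betaSet p' K := eq_of_runner_eq ht fun r hr => by
    have hcard := congrArg (fun S => (runner t r S).card) habacus
    simp only [runner_abacusCore hr, card_range] at hcard
    refine eq_of_ptnOfBetaSet_eq hcard ?_
    rw [← quotientPart_eq_of_le hr hK hd, ← quotientPart_eq_of_le hr hK' hd, hquot r hr]
  rw [← ptnOfBetaSet_betaSet hK, hbeta, ptnOfBetaSet_betaSet hK']

theorem card_runner_betaSet_add_mul {t r K : ℕ} (hr : r < t) {p : Ptn}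
    (hK : p.2.parts.card ≤ K) (m : ℕ) :
    (runner t r (betaSet p (K + t * m))).card = (runner t r (betaSet p K)).card + m := by
  rw [betaSet_add hK, Function.iterate_mul]
  induction m with
  | zero => rfl
  | succ m ih =>
    rw [Function.iterate_succ_apply', runner_iterate_shiftBeads hr, card_shiftBeads, ih,
      add_assoc]

theorem exists_core_eq_quotientPart_eq {t : ℕ} (ht : 0 < t) {c : Ptn} (hc : core t c = c)
    (qs : ℕ → Ptn) : ∃ p, core t p = c ∧ ∀ r < t, quotientPart t p r = qs r := by
  set N := ∑ r ∈ range t, (qs r).2.parts.card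
  set K := beads t c + t * N
  have hK : c.2.parts.card ≤ K := (card_parts_le_beads ht c).trans (Nat.le_add_right _ _)
  have hd : t ∣ K := dvd_add (dvd_mul_right _ _) (dvd_mul_right _ _)
  -- the `N` extra beads on each runner leave room there for a beta-set of `qs r`
  have hroom (r : ℕ) (hr : r < t) : (qs r).2.parts.card ≤ (runner t r (betaSet c K)).card := by
    rw [card_runner_betaSet_add_mul hr (card_parts_le_beads ht c)]
    refine le_add_left (single_le_sum (f := fun r => (qs r).2.parts.card) ?_ (mem_range.mpr hr))
    exact fun _ _ => Nat.zero_le _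
  set S := abacusOf t fun r => betaSet (qs r) (runner t r (betaSet c K)).card
  have hS (r : ℕ) (hr : r < t) :
      runner t r S = betaSet (qs r) (runner t r (betaSet c K)).card :=
    runner_abacusOf hr _
  have hcard : S.card = K := by
    rw [card_eq_sum_card_runner ht, ← card_betaSet c K, card_eq_sum_card_runner ht (betaSet c K)]
    exact sum_congr rfl fun r hr => by rw [hS r (mem_range.mp hr), card_betaSet]
  have hpS : betaSet (ptnOfBetaSet S) K = S := hcard ▸ betaSet_ptnOfBetaSet S
  have hpK : (ptnOfBetaSet S).2.parts.card ≤ K := hcard ▸ card_parts_ptnOfBetaSet_le S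
  refine ⟨ptnOfBetaSet S, ?_, fun r hr => ?_⟩
  · have habacus : abacusCore t S = abacusCore t (betaSet c K) := eq_of_runner_eq ht fun r hr => by
      rw [runner_abacusCore hr, runner_abacusCore hr, hS r hr, card_betaSet]
    rw [core_eq_of_le ht hpK hd, hpS, habacus, ← core_eq_of_le ht hK hd, hc]
  · rw [quotientPart_eq_of_le hr hpK hd, hpS, hS r hr, ptnOfBetaSet_betaSet (hroom r hr)]

theorem List.eq_of_flatMap_eq_of_length_eq {α β : Type*} {l : List α} {f g : α → List β}
    (hlen : ∀ a ∈ l, (f a).length = (g a).length) (h : l.flatMap f = l.flatMap g) :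
    ∀ a ∈ l, f a = g a := by
  induction l with
  | nil => simp
  | cons a l ih =>
    rw [List.flatMap_cons, List.flatMap_cons] at h
    obtain ⟨hfa, hl⟩ := List.append_inj h (hlen a List.mem_cons_self)
    exact List.forall_mem_cons.mpr
      ⟨hfa, ih (fun b hb => hlen b (List.mem_cons_of_mem a hb)) hl⟩

section Tower

variable {t : ℕ}

theorem preTower_succ_eq (p : Ptn) (k : ℕ) :
    preTower t p (k + 1) = (List.range t).flatMap fun r => preTower t (quotientPart t p r) k := by
  induction k with
  | zero => simp [preTower, quotient_eq_map, List.map_eq_flatMap]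
  | succ k ih =>
    rw [preTower, ih, List.flatMap_assoc]
    rfl

theorem towerRow_succ_eq (p : Ptn) (k : ℕ) :
    towerRow t p (k + 1) = (List.range t).flatMap fun r => towerRow t (quotientPart t p r) k := by
  rw [towerRow, preTower_succ_eq, List.map_flatMap]
  rfl

theorem length_towerRow (p : Ptn) (k : ℕ) : (towerRow t p k).length = t ^ k := by
  induction k generalizing p with
  | zero => rfl
  | succ k ih => simp [towerRow_succ_eq, List.length_flatMap, ih, pow_succ, mul_comm]

theorem isGenCore_zero_iff {p : Ptn} : IsGenCore t 0 p ↔ ∀ r < t, (quotientPart t p r).1 = 0 := by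
  simp [IsGenCore, preTower, quotient_eq_map]

theorem isGenCore_succ_iff {j : ℕ} {p : Ptn} :
    IsGenCore t (j + 1) p ↔ ∀ r < t, IsGenCore t j (quotientPart t p r) := by
  simp only [IsGenCore, preTower_succ_eq (k := j + 1), List.mem_flatMap, List.mem_range]
  grind

end Tower

theorem exists_isGenCore_towerRow_eq {t : ℕ} (ht : 0 < t) (j : ℕ) (p : Ptn) :
    ∃ μ, IsGenCore t j μ ∧ ∀ k ≤ j, towerRow t μ k = towerRow t p k := by
  induction j generalizing p with
  | zero =>
    refine ⟨core t p, isGenCore_zero_iff.mpr fun r hr => size_quotientPart_core hr p,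
      fun k hk => ?_⟩
    obtain rfl : k = 0 := by omega
    exact congrArg (fun q => [q]) (core_core ht p)
  | succ j ih =>
    choose f hf_gen hf_row using ih
    obtain ⟨μ, hμ_core, hμ_quot⟩ :=
      exists_core_eq_quotientPart_eq ht (core_core ht p) fun r => f (quotientPart t p r)
    refine ⟨μ, isGenCore_succ_iff.mpr fun r hr => hμ_quot r hr ▸ hf_gen _, fun k hk => ?_⟩
    cases k with
    | zero => exact congrArg (fun q => [q]) hμ_core
    | succ k =>
      rw [towerRow_succ_eq, towerRow_succ_eq]
      exact List.flatMap_congr fun r hr => by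
        rw [hμ_quot r (List.mem_range.mp hr), hf_row _ k (by omega)]

theorem eq_of_isGenCore_of_towerRow_eq {t : ℕ} (ht : 0 < t) {j : ℕ} {ν ν' : Ptn}
    (hν : IsGenCore t j ν) (hν' : IsGenCore t j ν')
    (h : ∀ k ≤ j, towerRow t ν k = towerRow t ν' k) : ν = ν' := by
  induction j generalizing ν ν' with
  | zero =>
    refine eq_of_core_eq_of_quotientPart_eq ht (List.singleton_inj.mp (h 0 le_rfl))
      fun r hr => ?_
    exact Ptn.eq_of_size_eq_zero (isGenCore_zero_iff.mp hν r hr) (isGenCore_zero_iff.mp hν' r hr)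
  | succ j ih =>
    refine eq_of_core_eq_of_quotientPart_eq ht (List.singleton_inj.mp (h 0 (Nat.zero_le _)))
      fun r hr => ih (isGenCore_succ_iff.mp hν r hr) (isGenCore_succ_iff.mp hν' r hr)
        fun k hk => ?_
    have hrow := h (k + 1) (by omega)
    rw [towerRow_succ_eq, towerRow_succ_eq] at hrow
    exact List.eq_of_flatMap_eq_of_length_eq (fun _ _ => by rw [length_towerRow, length_towerRow])
      hrow r (List.mem_range.mpr hr)

/-- every partition is `∼_j`-equivalent to a unique generalized
`(j,t)`-core, where `λ ∼_j μ` means `β_k(t;λ) = β_k(t;μ)` for all `0 ≤ k ≤ j`. -/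
theorem unique_gen_core_in_class (t : ℕ) (ht : 2 ≤ t) (j : ℕ) (lam : Ptn) :
    ∃! mu : Ptn, IsGenCore t j mu ∧ ∀ k ≤ j, towerRow t mu k = towerRow t lam k := by
  have ht0 : 0 < t := by omega
  obtain ⟨mu, hmu, hrow⟩ := exists_isGenCore_towerRow_eq ht0 j lam
  refine ⟨mu, ⟨hmu, hrow⟩, fun nu ⟨hnu, hnu_row⟩ => ?_⟩
  exact eq_of_isGenCore_of_towerRow_eq ht0 hnu hmu fun k hk => (hnu_row k hk).trans (hrow k hk).symm
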